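/- Let G be a k-chromatic graph and w a critical vertex of G. If {u,v} is an implicit-edge of G with w ∉ {u,v}, then w is adjacent to at least one of u and v. -/

import Mathlib

/-!
Colour `G - w` with `k - 1` colours. If `w` were adjacent to neither `u` nor `v`, then
`{w, u, v}` would be independent, and giving these three vertices a fresh `k`-th colour
would yield a proper `k`-colouring of `G` in which `u` and `v` share a colour.
-/

namespace SimpleGraph

variable {V α : Type*} {G : SimpleGraph V}

open Classical in
noncomputable def Coloring.extendOfIsIndepSet {s : Set V} (hs : G.IsIndepSet s)
    (c : (G.induce sᶜ).Coloring α) : G.Coloring (Option α) :=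
  Coloring.mk (fun x => if hx : x ∈ s then none else some (c ⟨x, hx⟩)) fun {x y} hxy => by
    by_cases hx : x ∈ s <;> by_cases hy : y ∈ s
    · exact absurd hxy (hs hx hy (G.ne_of_adj hxy))
    all_goals simp only [hx, hy, dite_true, dite_false, ne_eq, reduceCtorEq, not_false_eq_true,
      Option.some.injEq]
    exact c.valid hxy

theorem Coloring.extendOfIsIndepSet_of_mem {s : Set V} (hs : G.IsIndepSet s)
    (c : (G.induce sᶜ).Coloring α) {x : V} (hx : x ∈ s) : c.extendOfIsIndepSet hs x = none :=
  dif_pos hx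

theorem colorable_of_chromaticNumber_lt_succ {n : ℕ} (h : G.chromaticNumber < (n + 1 : ℕ)) :
    G.Colorable n := by
  rw [← chromaticNumber_le_iff_colorable]
  exact Order.le_of_lt_add_one (by exact_mod_cast h)

theorem exists_coloring_const_on_of_chromaticNumber_induce_lt {k : ℕ} {w : V} {s : Set V}
    (hws : w ∈ s) (hs : G.IsIndepSet s)
    (hw : (G.induce {x | x ≠ w}).chromaticNumber < k) :
    ∃ (c : G.Coloring (Fin k)) (i : Fin k), ∀ x ∈ s, c x = i := by
  obtain ⟨n, rfl⟩ : ∃ n, k = n + 1 :=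
    Nat.exists_eq_add_one.mpr (Nat.pos_of_ne_zero (by rintro rfl; simp at hw))
  obtain ⟨c⟩ := colorable_of_chromaticNumber_lt_succ hw
  have hsub : sᶜ ≤ {x | x ≠ w} := fun x hx => by rintro rfl; exact hx hws
  let c' := Coloring.extendOfIsIndepSet hs (c.comap (induceHomOfLE G hsub).toHom)
  refine ⟨recolorOfEquiv G (finSuccEquiv n).symm c', 0, fun x hx => ?_⟩
  simp [c', Coloring.extendOfIsIndepSet_of_mem hs _ hx]

end SimpleGraph

theorem critical_vertex_adj_implicit_edge_general {V : Type*}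
    (G : SimpleGraph V) (k : ℕ)
    (w : V) (hw : (G.induce {x | x ≠ w}).chromaticNumber < (k : ℕ∞))
    (u v : V) (huv : ¬ G.Adj u v)
    (hie : ∀ c : G.Coloring (Fin k), c u ≠ c v) :
    G.Adj w u ∨ G.Adj w v := by
  by_contra! h
  have hs : G.IsIndepSet {w, u, v} := by
    simp only [SimpleGraph.IsIndepSet, Set.pairwise_insert, Set.pairwise_singleton,
      Set.mem_insert_iff, Set.mem_singleton_iff]
    grind [G.adj_symm]
  obtain ⟨c, i, hc⟩ := G.exists_coloring_const_on_of_chromaticNumber_induce_lt (by simp) hs hw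
  exact hie c ((hc u (by simp)).trans (hc v (by simp)).symm)

/-- If `w` is a critical vertex of a `k`-chromatic graph `G` and
`{u,v}` is an implicit-edge of `G` with `w ∉ {u,v}`, then `w` is adjacent to at
least one of `u` and `v`. -/
theorem critical_vertex_adj_implicit_edge {V : Type*} [Fintype V]
    (G : SimpleGraph V) (k : ℕ) (hk : G.chromaticNumber = k)
    (w : V) (hw : (G.induce {x | x ≠ w}).chromaticNumber < (k : ℕ∞))
    (u v : V) (huv : ¬ G.Adj u v) (hne : u ≠ v) (hwu : w ≠ u) (hwv : w ≠ v)
    (hie : ∀ c : G.Coloring (Fin k), c u ≠ c v) :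
    G.Adj w u ∨ G.Adj w v :=
  critical_vertex_adj_implicit_edge_general G k w hw u v huv hie
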